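/- Let γ > 0, let W, V : ℝ → ℂ be continuous and γ-periodic, let λ ∈ ℝ, let k₁, k₂ ∈ ℂ with (k₁ − k₂)·γ/(2π) ∉ ℤ, and let p₁, p₂ : ℝ → ℂ be twice continuously differentiable and γ-periodic. If ψ(x) := e^{i k₁ x} p₁(x) + e^{i k₂ x} p₂(x) satisfies −ψ''(x) + W(x)ψ'(x) + V(x)ψ(x) = λψ(x) for all x ∈ ℝ, then −p₁''(x) + (W(x) − 2i k₁)p₁'(x) + (i k₁ W(x) + V(x) + k₁²)p₁(x) = λp₁(x) and −p₂''(x) + (W(x) − 2i k₂)p₂'(x) + (i k₂ W(x) + V(x) + k₂²)p₂(x) = λp₂(x) for all x ∈ ℝ. In particular, e^{i k₁ x}p₁(x) and e^{i k₂ x}p₂(x) are each solutions of the Sturm–Liouville equation for the same λ. -/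

import Mathlib

open Complex

lemma hasDerivAt_exp_mul' (k : ℂ) (x : ℝ) :
    HasDerivAt (fun y : ℝ => Complex.exp (Complex.I * k * y))
      (Complex.I * k * Complex.exp (Complex.I * k * x)) x := by
  have h0 : HasDerivAt (fun y : ℝ => (y : ℂ)) 1 x := by
    simpa using (hasDerivAt_id x).ofReal_comp
  have h1 : HasDerivAt (fun y : ℝ => Complex.I * k * (y : ℂ)) (Complex.I * k) x := by
    simpa using h0.const_mul (Complex.I * k)
  simpa [mul_comm] using h1.cexp

lemma deriv_exp_mul' (k : ℂ) {p : ℝ → ℂ} (hp : Differentiable ℝ p) (x : ℝ) :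
    deriv (fun y : ℝ => Complex.exp (Complex.I * k * y) * p y) x
      = Complex.exp (Complex.I * k * x) * (Complex.I * k * p x + deriv p x) := by
  have h := ((hasDerivAt_exp_mul' k x).fun_mul (hp x).hasDerivAt).deriv
  rw [h]; ring

lemma diff_exp_mul' (k : ℂ) {p : ℝ → ℂ} (hp : Differentiable ℝ p) :
    Differentiable ℝ (fun y : ℝ => Complex.exp (Complex.I * k * y) * p y) :=
  fun x => ((hasDerivAt_exp_mul' k x).mul (hp x).hasDerivAt).differentiableAt

lemma deriv_per' {γ : ℝ} {p : ℝ → ℂ} (hper : ∀ x, p (x + γ) = p x) (x : ℝ) :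
    deriv p (x + γ) = deriv p x := by
  have h : (fun y : ℝ => p (y + γ)) = p := funext hper
  calc deriv p (x + γ) = deriv (fun y : ℝ => p (y + γ)) x := (deriv_comp_add_const p γ x).symm
    _ = deriv p x := by rw [h]

lemma diff_deriv_of_contDiff2 {p : ℝ → ℂ} (hp : ContDiff ℝ 2 p) :
    Differentiable ℝ (deriv p) := by
  have : ContDiff ℝ (1+1) p := by exact_mod_cast hp
  exact ((contDiff_succ_iff_deriv.mp this).2.2).differentiable one_ne_zero

lemma deriv2_exp_mul' (k : ℂ) {p : ℝ → ℂ} (hp : ContDiff ℝ 2 p) (x : ℝ) :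
    deriv (deriv (fun y : ℝ => Complex.exp (Complex.I * k * y) * p y)) x
      = Complex.exp (Complex.I * k * x) *
        (Complex.I * k * (Complex.I * k * p x + deriv p x)
          + (Complex.I * k * deriv p x + deriv (deriv p) x)) := by
  have hpd : Differentiable ℝ p := hp.differentiable (by norm_num)
  have hpd' : Differentiable ℝ (deriv p) := diff_deriv_of_contDiff2 hp
  have hq : Differentiable ℝ (fun y : ℝ => Complex.I * k * p y + deriv p y) :=
    (hpd.const_mul _).add hpd'
  have e1 : deriv (fun y : ℝ => Complex.exp (Complex.I * k * y) * p y)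
      = fun y : ℝ => Complex.exp (Complex.I * k * y) * (Complex.I * k * p y + deriv p y) :=
    funext fun y => deriv_exp_mul' k hpd y
  rw [e1, deriv_exp_mul' k hq x,
    deriv_fun_add ((hpd x).const_mul (Complex.I * k)) (hpd' x),
    deriv_const_mul (Complex.I * k) (hpd x)]

/-- if `ψ(x) = e^{ik₁x}p₁(x) + e^{ik₂x}p₂(x)` with `k₁ ≢ k₂ (mod 2π/γ)`
solves the Sturm–Liouville equation, then `D^{k₁}p₁ = λp₁` and `D^{k₂}p₂ = λp₂`; in
particular each `e^{ikⱼx}pⱼ(x)` is itself a solution for the same `λ`. -/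
theorem two_bloch_components_each_solve
    (γ : ℝ) (hγ : 0 < γ) (W V : ℝ → ℂ)
    (hWcont : Continuous W) (hVcont : Continuous V)
    (hWper : ∀ x : ℝ, W (x + γ) = W x) (hVper : ∀ x : ℝ, V (x + γ) = V x)
    (lam : ℝ) (k₁ k₂ : ℂ)
    (hk : ¬ ∃ m : ℤ, (k₁ - k₂) * (γ : ℂ) / (2 * (Real.pi : ℂ)) = (m : ℂ))
    (p₁ p₂ : ℝ → ℂ) (hp₁ : ContDiff ℝ 2 p₁) (hp₂ : ContDiff ℝ 2 p₂)
    (hp₁per : ∀ x : ℝ, p₁ (x + γ) = p₁ x) (hp₂per : ∀ x : ℝ, p₂ (x + γ) = p₂ x)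
    (heq : ∀ x : ℝ,
      -(deriv (deriv (fun y : ℝ =>
          Complex.exp (Complex.I * k₁ * y) * p₁ y
          + Complex.exp (Complex.I * k₂ * y) * p₂ y)) x)
      + W x * deriv (fun y : ℝ =>
          Complex.exp (Complex.I * k₁ * y) * p₁ y
          + Complex.exp (Complex.I * k₂ * y) * p₂ y) x
      + V x * (Complex.exp (Complex.I * k₁ * x) * p₁ x
          + Complex.exp (Complex.I * k₂ * x) * p₂ x)
      = (lam : ℂ) * (Complex.exp (Complex.I * k₁ * x) * p₁ x
          + Complex.exp (Complex.I * k₂ * x) * p₂ x)) :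
    (∀ x : ℝ,
      -(deriv (deriv p₁) x) + (W x - 2 * Complex.I * k₁) * deriv p₁ x
      + (Complex.I * k₁ * W x + V x + k₁ ^ 2) * p₁ x = (lam : ℂ) * p₁ x) ∧
    (∀ x : ℝ,
      -(deriv (deriv p₂) x) + (W x - 2 * Complex.I * k₂) * deriv p₂ x
      + (Complex.I * k₂ * W x + V x + k₂ ^ 2) * p₂ x = (lam : ℂ) * p₂ x) ∧
    (∀ x : ℝ,
      -(deriv (deriv (fun y : ℝ => Complex.exp (Complex.I * k₁ * y) * p₁ y)) x)
      + W x * deriv (fun y : ℝ => Complex.exp (Complex.I * k₁ * y) * p₁ y) x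
      + V x * (Complex.exp (Complex.I * k₁ * x) * p₁ x)
      = (lam : ℂ) * (Complex.exp (Complex.I * k₁ * x) * p₁ x)) ∧
    (∀ x : ℝ,
      -(deriv (deriv (fun y : ℝ => Complex.exp (Complex.I * k₂ * y) * p₂ y)) x)
      + W x * deriv (fun y : ℝ => Complex.exp (Complex.I * k₂ * y) * p₂ y) x
      + V x * (Complex.exp (Complex.I * k₂ * x) * p₂ x)
      = (lam : ℂ) * (Complex.exp (Complex.I * k₂ * x) * p₂ x)) := by
  have hpd₁ : Differentiable ℝ p₁ := hp₁.differentiable (by norm_num)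
  have hpd₂ : Differentiable ℝ p₂ := hp₂.differentiable (by norm_num)
  have hpd₁' : Differentiable ℝ (deriv p₁) := diff_deriv_of_contDiff2 hp₁
  have hpd₂' : Differentiable ℝ (deriv p₂) := diff_deriv_of_contDiff2 hp₂
  set g₁ : ℝ → ℂ := fun x => -(deriv (deriv p₁) x) + (W x - 2 * Complex.I * k₁) * deriv p₁ x
      + (Complex.I * k₁ * W x + V x + k₁ ^ 2) * p₁ x - (lam : ℂ) * p₁ x with hg₁
  set g₂ : ℝ → ℂ := fun x => -(deriv (deriv p₂) x) + (W x - 2 * Complex.I * k₂) * deriv p₂ x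
      + (Complex.I * k₂ * W x + V x + k₂ ^ 2) * p₂ x - (lam : ℂ) * p₂ x with hg₂
  have hd₁ : Differentiable ℝ (fun y : ℝ => Complex.exp (Complex.I * k₁ * y) * p₁ y) :=
    diff_exp_mul' k₁ hpd₁
  have hd₂ : Differentiable ℝ (fun y : ℝ => Complex.exp (Complex.I * k₂ * y) * p₂ y) :=
    diff_exp_mul' k₂ hpd₂
  have hdf₁ : deriv (fun y : ℝ => Complex.exp (Complex.I * k₁ * y) * p₁ y)
      = fun y : ℝ => Complex.exp (Complex.I * k₁ * y) * (Complex.I * k₁ * p₁ y + deriv p₁ y) :=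
    funext fun y => deriv_exp_mul' k₁ hpd₁ y
  have hdf₂ : deriv (fun y : ℝ => Complex.exp (Complex.I * k₂ * y) * p₂ y)
      = fun y : ℝ => Complex.exp (Complex.I * k₂ * y) * (Complex.I * k₂ * p₂ y + deriv p₂ y) :=
    funext fun y => deriv_exp_mul' k₂ hpd₂ y
  have hd₁' : Differentiable ℝ (deriv (fun y : ℝ => Complex.exp (Complex.I * k₁ * y) * p₁ y)) := by
    rw [hdf₁]; exact diff_exp_mul' k₁ ((hpd₁.const_mul _).add hpd₁')
  have hd₂' : Differentiable ℝ (deriv (fun y : ℝ => Complex.exp (Complex.I * k₂ * y) * p₂ y)) := by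
    rw [hdf₂]; exact diff_exp_mul' k₂ ((hpd₂.const_mul _).add hpd₂')
  -- the key identity
  have key : ∀ x : ℝ, Complex.exp (Complex.I * k₁ * x) * g₁ x
      + Complex.exp (Complex.I * k₂ * x) * g₂ x = 0 := by
    intro x
    have h := heq x
    have hsum : deriv (fun y : ℝ =>
        Complex.exp (Complex.I * k₁ * y) * p₁ y + Complex.exp (Complex.I * k₂ * y) * p₂ y)
        = fun y : ℝ => deriv (fun y : ℝ => Complex.exp (Complex.I * k₁ * y) * p₁ y) y
            + deriv (fun y : ℝ => Complex.exp (Complex.I * k₂ * y) * p₂ y) y :=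
      funext fun y => deriv_add (hd₁ y) (hd₂ y)
    rw [hsum] at h
    beta_reduce at h
    rw [deriv_fun_add (hd₁' x) (hd₂' x)] at h
    rw [deriv2_exp_mul' k₁ hp₁ x, deriv2_exp_mul' k₂ hp₂ x,
      deriv_exp_mul' k₁ hpd₁ x, deriv_exp_mul' k₂ hpd₂ x] at h
    simp only [hg₁, hg₂]
    linear_combination h + (Complex.exp (Complex.I * k₁ * x) * k₁ ^ 2 * p₁ x
      + Complex.exp (Complex.I * k₂ * x) * k₂ ^ 2 * p₂ x) * Complex.I_sq
  -- exp(Ik₁γ) ≠ exp(Ik₂γ)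
  have hne : Complex.exp (Complex.I * k₁ * γ) ≠ Complex.exp (Complex.I * k₂ * γ) := by
    intro h
    have h1 : Complex.exp (Complex.I * (k₁ - k₂) * γ) = 1 := by
      rw [show Complex.I * (k₁ - k₂) * γ
          = Complex.I * k₁ * γ - Complex.I * k₂ * γ by ring,
        Complex.exp_sub, h, div_self (Complex.exp_ne_zero _)]
    obtain ⟨n, hn⟩ := Complex.exp_eq_one_iff.mp h1
    apply hk
    refine ⟨n, ?_⟩
    have hπ : (Real.pi : ℂ) ≠ 0 := by exact_mod_cast Real.pi_ne_zero
    have hI : (Complex.I : ℂ) ≠ 0 := Complex.I_ne_zero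
    field_simp
    have h2 : Complex.I * ((k₁ - k₂) * γ) = Complex.I * ((n : ℂ) * (2 * Real.pi)) := by
      linear_combination hn
    have h3 := mul_left_cancel₀ hI h2
    linear_combination h3
  have hE : ∀ (k : ℂ) (x : ℝ), Complex.exp (Complex.I * k * ((x + γ : ℝ) : ℂ))
      = Complex.exp (Complex.I * k * x) * Complex.exp (Complex.I * k * γ) := by
    intro k x
    rw [← Complex.exp_add]
    congr 1
    push_cast
    ring
  have hg₁per : ∀ x : ℝ, g₁ (x + γ) = g₁ x := by
    intro x
    simp only [hg₁]
    rw [hWper, hVper, hp₁per, deriv_per' hp₁per, deriv_per' (fun y => deriv_per' hp₁per y)]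
  have hg₂per : ∀ x : ℝ, g₂ (x + γ) = g₂ x := by
    intro x
    simp only [hg₂]
    rw [hWper, hVper, hp₂per, deriv_per' hp₂per, deriv_per' (fun y => deriv_per' hp₂per y)]
  have hg₂zero : ∀ x : ℝ, g₂ x = 0 := by
    intro x
    have h1 := key x
    have h2 := key (x + γ)
    rw [hg₁per, hg₂per] at h2
    rw [hE k₁ x, hE k₂ x] at h2
    have h3 : Complex.exp (Complex.I * k₂ * x) * g₂ x *
        (Complex.exp (Complex.I * k₂ * γ) - Complex.exp (Complex.I * k₁ * γ)) = 0 := by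
      linear_combination h2 - Complex.exp (Complex.I * k₁ * γ) * h1
    rcases mul_eq_zero.mp h3 with h4 | h4
    · rcases mul_eq_zero.mp h4 with h5 | h5
      · exact absurd h5 (Complex.exp_ne_zero _)
      · exact h5
    · exact absurd (sub_eq_zero.mp h4).symm hne
  have hg₁zero : ∀ x : ℝ, g₁ x = 0 := by
    intro x
    have h1 := key x
    rw [hg₂zero x, mul_zero, add_zero] at h1
    rcases mul_eq_zero.mp h1 with h5 | h5
    · exact absurd h5 (Complex.exp_ne_zero _)
    · exact h5
  have c₁ : ∀ x : ℝ,
      -(deriv (deriv p₁) x) + (W x - 2 * Complex.I * k₁) * deriv p₁ x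
      + (Complex.I * k₁ * W x + V x + k₁ ^ 2) * p₁ x = (lam : ℂ) * p₁ x := by
    intro x
    have h := hg₁zero x
    simp only [hg₁] at h
    linear_combination h
  have c₂ : ∀ x : ℝ,
      -(deriv (deriv p₂) x) + (W x - 2 * Complex.I * k₂) * deriv p₂ x
      + (Complex.I * k₂ * W x + V x + k₂ ^ 2) * p₂ x = (lam : ℂ) * p₂ x := by
    intro x
    have h := hg₂zero x
    simp only [hg₂] at h
    linear_combination h
  refine ⟨c₁, c₂, ?_, ?_⟩
  · intro x
    rw [deriv2_exp_mul' k₁ hp₁ x, deriv_exp_mul' k₁ hpd₁ x]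
    have h := hg₁zero x
    simp only [hg₁] at h
    linear_combination Complex.exp (Complex.I * k₁ * x) * h
      - Complex.exp (Complex.I * k₁ * x) * k₁ ^ 2 * p₁ x * Complex.I_sq
  · intro x
    rw [deriv2_exp_mul' k₂ hp₂ x, deriv_exp_mul' k₂ hpd₂ x]
    have h := hg₂zero x
    simp only [hg₂] at h
    linear_combination Complex.exp (Complex.I * k₂ * x) * h
      - Complex.exp (Complex.I * k₂ * x) * k₂ ^ 2 * p₂ x * Complex.I_sq
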